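/- The set S = {i(G)/c(G) : G a finite group} is dense in [0, 1], where i(G) = |{x ∈ G : x^2 = 1}| and c(G) is the number of cyclic subgroups of G. -/

import Mathlib

/-!
Counting each cyclic subgroup `C` through its `φ |C|` generators gives
`c(G) = ∑_g 1 / φ(o(g))`. Since `φ (lcm a b) = φ a * φ b` when `gcd a b ∣ 2`, this makes `c`
multiplicative on direct products of groups whose orders have gcd dividing `2`; `i` is always
multiplicative. For an odd prime `p`, `i(D_p) = p + 1` and `c(D_p) = p + 2`, so products of the
dihedral groups `D_p` over distinct odd primes realize every finite product `∏ (p + 1) / (p + 2)`.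
Over the primes `p ≥ N` these factors exceed `1 - 1/N` while `∑ 1 / (p + 2)` diverges, so the
partial products fall from `1` towards `0` in steps smaller than `1/N` and pass within `1/N` of
every point of `[0, 1]`.
-/

noncomputable def numInv (G : Type*) [Group G] : ℕ := Nat.card {x : G // x ^ 2 = 1}

noncomputable def numCyc (G : Type*) [Group G] : ℕ := Nat.card {H : Subgroup G // IsCyclic H}

open Finset Subgroup

theorem Nat.totient_gcd_mul_totient_lcm (a b : ℕ) :
    (a.gcd b).totient * (a.lcm b).totient = a.totient * b.totient := by
  rcases Nat.eq_zero_or_pos (a.gcd b) with h | hpos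
  · obtain ⟨rfl, rfl⟩ := Nat.gcd_eq_zero_iff.1 h
    simp
  have h := Nat.totient_gcd_mul_totient_mul (a.gcd b) (a.lcm b)
  rw [Nat.gcd_eq_left ((Nat.gcd_dvd_left a b).trans (Nat.dvd_lcm_left a b)), Nat.gcd_mul_lcm,
    Nat.totient_gcd_mul_totient_mul a b] at h
  exact Nat.eq_of_mul_eq_mul_right hpos (by linarith)

theorem Nat.totient_lcm_of_gcd_dvd_two {a b : ℕ} (h : a.gcd b ∣ 2) :
    (a.lcm b).totient = a.totient * b.totient := by
  have h1 : (a.gcd b).totient = 1 :=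
    Nat.totient_eq_one_iff.2 ((Nat.dvd_prime Nat.prime_two).1 h)
  simpa [h1] using Nat.totient_gcd_mul_totient_lcm a b

section

variable {G : Type*} [Group G]

theorem card_generators_eq_totient [Finite G] (C : Subgroup G) [IsCyclic C] :
    Nat.card {g : G // zpowers g = C} = (Nat.card C).totient := by
  classical
  cases nonempty_fintype G
  rw [Nat.card_eq_fintype_card, Fintype.card_subtype, Nat.card_eq_fintype_card,
    ← IsCyclic.card_orderOf_eq_totient dvd_rfl]
  symm
  refine card_bij (fun h _ => (h : G)) ?_ (fun _ _ _ _ => Subtype.ext) ?_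
  · intro h hh
    simp only [mem_filter, mem_univ, true_and] at hh ⊢
    refine eq_of_le_of_card_ge (zpowers_le.2 h.2) ?_
    rw [Nat.card_zpowers, orderOf_coe, hh, Nat.card_eq_fintype_card]
  · intro g hg
    simp only [mem_filter, mem_univ, true_and] at hg ⊢
    refine ⟨⟨g, hg ▸ mem_zpowers g⟩, ?_, rfl⟩
    rw [orderOf_mk, ← Nat.card_zpowers, hg, Nat.card_eq_fintype_card]

theorem numCyc_eq_sum_inv_totient [Fintype G] :
    (numCyc G : ℚ) = ∑ g : G, ((orderOf g).totient : ℚ)⁻¹ := by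
  classical
  let f : G → {C : Subgroup G // IsCyclic C} := fun g => ⟨zpowers g, isCyclic_zpowers g⟩
  rw [← sum_fiberwise univ f, numCyc, Nat.card_eq_fintype_card, Fintype.card_eq_sum_ones,
    Nat.cast_sum]
  refine Fintype.sum_congr _ _ fun ⟨C, hC⟩ => ?_
  have hfib : ∀ g, f g = ⟨C, hC⟩ ↔ zpowers g = C := fun g => Subtype.ext_iff
  have horder : ∀ g ∈ ({g | f g = ⟨C, hC⟩} : Finset G), orderOf g = Nat.card C := by
    intro g hg
    rw [← Nat.card_zpowers, ← (hfib g).1 (mem_filter.1 hg).2]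
  rw [sum_congr rfl fun g hg => by rw [horder g hg], sum_const, nsmul_eq_mul,
    filter_congr fun g _ => hfib g, ← Fintype.card_subtype, ← Nat.card_eq_fintype_card,
    card_generators_eq_totient, Nat.cast_one]
  exact (mul_inv_cancel₀ (Nat.cast_ne_zero.2 (Nat.totient_pos.2 Nat.card_pos).ne')).symm

end

section

variable {K H : Type*} [Group K] [Group H]

theorem numInv_prod : numInv (K × H) = numInv K * numInv H := by
  rw [numInv, numInv, numInv, ← Nat.card_prod]
  refine Nat.card_congr ((Equiv.subtypeEquivRight fun x => ?_).trans Equiv.subtypeProdEquivProd)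
  simp [Prod.ext_iff]

theorem numCyc_prod [Finite K] [Finite H] (h : (Nat.card K).gcd (Nat.card H) ∣ 2) :
    numCyc (K × H) = numCyc K * numCyc H := by
  cases nonempty_fintype K
  cases nonempty_fintype H
  have htot (a : K) (b : H) :
      (orderOf (a, b)).totient = (orderOf a).totient * (orderOf b).totient :=
    Prod.orderOf (a, b) ▸ Nat.totient_lcm_of_gcd_dvd_two
      ((Nat.gcd_dvd_gcd_of_dvd_left _ (orderOf_dvd_natCard a)).trans
        ((Nat.gcd_dvd_gcd_of_dvd_right _ (orderOf_dvd_natCard b)).trans h))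
  suffices (numCyc (K × H) : ℚ) = numCyc K * numCyc H by exact_mod_cast this
  rw [numCyc_eq_sum_inv_totient, numCyc_eq_sum_inv_totient, numCyc_eq_sum_inv_totient,
    Fintype.sum_prod_type, sum_mul_sum]
  simp only [htot, Nat.cast_mul, mul_inv]

end

namespace DihedralGroup

variable {n : ℕ}

theorem sum_eq_sum_r_add_sum_sr [NeZero n] {M : Type*} [AddCommMonoid M] (f : DihedralGroup n → M) :
    ∑ g, f g = ∑ i, f (r i) + ∑ i, f (sr i) := by
  rw [← (equivSum (n := n)).symm.sum_comp f, Fintype.sum_sum_type]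
  rfl

theorem r_sq_eq_one_iff (hn : Odd n) {i : ZMod n} : (r i) ^ 2 = 1 ↔ i = 0 := by
  have h2 : IsUnit (2 : ZMod n) := by
    simpa using (ZMod.unitOfCoprime 2 (Nat.coprime_two_left.2 hn)).isUnit
  rw [r_pow, one_def, r.injEq, Nat.cast_ofNat, h2.mul_left_eq_zero]

theorem numInv_eq (hn : Odd n) : numInv (DihedralGroup n) = n + 1 := by
  have : NeZero n := ⟨hn.pos.ne'⟩
  classical
  rw [numInv, Nat.card_eq_fintype_card, Fintype.card_subtype, card_filter, sum_eq_sum_r_add_sum_sr]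
  simp only [r_sq_eq_one_iff hn]
  simp [sq, add_comm]

theorem orderOf_r_of_prime {p : ℕ} [Fact p.Prime] {i : ZMod p} (hi : i ≠ 0) :
    orderOf (r i) = p :=
  orderOf_eq_prime (by rw [r_pow, ZMod.natCast_self, mul_zero, one_def])
    (by rwa [one_def, ne_eq, r.injEq])

theorem numCyc_eq {p : ℕ} [Fact p.Prime] : numCyc (DihedralGroup p) = p + 2 := by
  classical
  have hp : p.Prime := Fact.out
  suffices (numCyc (DihedralGroup p) : ℚ) = p + 2 by exact_mod_cast this
  rw [numCyc_eq_sum_inv_totient, sum_eq_sum_r_add_sum_sr, Fintype.sum_eq_add_sum_compl 0]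
  simp only [orderOf_sr, Nat.totient_two]
  rw [sum_congr rfl fun i hi => by rw [orderOf_r_of_prime (by simpa using hi)]]
  have : ((p - 1 : ℕ) : ℚ) ≠ 0 := by simp [Nat.sub_eq_zero_iff_le, hp.one_lt]
  simp only [Nat.totient_prime hp, sum_const, card_compl, card_singleton, ZMod.card,
    nsmul_eq_mul, mul_inv_cancel₀ this, ← one_def, orderOf_one, Nat.totient_one, card_univ]
  ring

end DihedralGroup

theorem exists_group_numInv_numCyc_eq_prod (S : Finset ℕ) (hS : ∀ p ∈ S, p.Prime ∧ p ≠ 2) :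
    ∃ (G : Type) (_ : Group G) (_ : Finite G),
      numInv G = ∏ p ∈ S, (p + 1) ∧ numCyc G = ∏ p ∈ S, (p + 2) ∧
        ∀ q, q.Prime → q ≠ 2 → q ∉ S → q.Coprime (Nat.card G) := by
  induction S using Finset.induction_on with
  | empty =>
    exact ⟨Unit, inferInstance, inferInstance, by simp [numInv],
      Nat.card_eq_one_iff_unique.2 ⟨inferInstance, ⟨⟨⊥, inferInstance⟩⟩⟩, by simp⟩
  | insert p S hpS ih =>
    obtain ⟨hp, hp2⟩ := hS p (mem_insert_self p S)
    obtain ⟨G, _, _, hinv, hcyc, hcop⟩ := ih fun q hq => hS q (mem_insert_of_mem hq)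
    have : Fact p.Prime := ⟨hp⟩
    have : NeZero p := ⟨hp.ne_zero⟩
    have hgcd : (Nat.card (DihedralGroup p)).gcd (Nat.card G) ∣ 2 := by
      rw [DihedralGroup.nat_card, Nat.Coprime.gcd_mul_right_cancel 2 (hcop p hp hp2 hpS)]
      exact Nat.gcd_dvd_left 2 _
    refine ⟨DihedralGroup p × G, inferInstance, inferInstance, ?_, ?_, fun q hq hq2 hqS => ?_⟩
    · rw [numInv_prod, DihedralGroup.numInv_eq (hp.odd_of_ne_two hp2), hinv, prod_insert hpS]
    · rw [numCyc_prod hgcd, DihedralGroup.numCyc_eq, hcyc, prod_insert hpS]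
    · obtain ⟨hqp, hqS⟩ := not_or.1 (mem_insert.not.1 hqS)
      rw [Nat.card_prod, DihedralGroup.nat_card]
      exact (((Nat.coprime_primes hq Nat.prime_two).2 hq2).mul_right
        ((Nat.coprime_primes hq hp).2 hqp)).mul_right (hcop q hq hq2 hqS)

theorem exists_group_ratio_eq_prod (S : Finset ℕ) (hS : ∀ p ∈ S, p.Prime ∧ p ≠ 2) :
    ∃ (G : Type) (_ : Group G) (_ : Finite G),
      (numInv G : ℝ) / numCyc G = ∏ p ∈ S, ((p : ℝ) + 1) / (p + 2) := by
  obtain ⟨G, hG, hfin, hinv, hcyc, -⟩ := exists_group_numInv_numCyc_eq_prod S hS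
  exact ⟨G, hG, hfin, by rw [hinv, hcyc, prod_div_distrib]; push_cast; rfl⟩

theorem exists_abs_sub_lt_of_forall_sub_lt {u : ℕ → ℝ} {t ε : ℝ} (hε : 0 < ε) (h0 : t ≤ u 0)
    (hstep : ∀ n, u n - u (n + 1) < ε) (hend : ∃ n, u n < t + ε) : ∃ n, |u n - t| < ε := by
  have hfind := Nat.find_spec hend
  refine ⟨Nat.find hend, abs_lt.2 ⟨?_, by linarith⟩⟩
  rcases Nat.eq_zero_or_pos (Nat.find hend) with h | h
  · rw [h]
    linarith
  · have hprev := not_lt.1 (Nat.find_min hend (Nat.sub_one_lt_of_lt h))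
    have := hstep (Nat.find hend - 1)
    rw [Nat.sub_add_cancel h] at this
    linarith

theorem exists_prod_one_sub_lt_of_not_summable {a : ℕ → ℝ} (h0 : ∀ n, 0 ≤ a n)
    (h1 : ∀ n, a n ≤ 1) (ha : ¬Summable a) {δ : ℝ} (hδ : 0 < δ) :
    ∃ n, ∏ k ∈ range n, (1 - a k) < δ := by
  obtain ⟨n, hn⟩ := (((not_summable_iff_tendsto_nat_atTop_of_nonneg h0).1 ha).eventually_gt_atTop
    (-Real.log δ)).exists
  refine ⟨n, ?_⟩
  calc ∏ k ∈ range n, (1 - a k) ≤ ∏ k ∈ range n, Real.exp (-a k) :=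
        prod_le_prod (fun k _ => sub_nonneg.2 (h1 k)) fun k _ => Real.one_sub_le_exp_neg _
    _ = Real.exp (-∑ k ∈ range n, a k) := by rw [← sum_neg_distrib, Real.exp_sum]
    _ < Real.exp (Real.log δ) := Real.exp_lt_exp.2 (by linarith)
    _ = δ := Real.exp_log hδ

theorem exists_abs_prod_one_sub_sub_lt {a : ℕ → ℝ} {t ε : ℝ} (h0 : ∀ n, 0 ≤ a n)
    (h1 : ∀ n, a n ≤ 1) (hsmall : ∀ n, a n < ε) (ha : ¬Summable a) (ht : t ∈ Set.Icc 0 1) :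
    ∃ n, |∏ k ∈ range n, (1 - a k) - t| < ε := by
  have hε : 0 < ε := (h0 0).trans_lt (hsmall 0)
  have hnonneg (n : ℕ) : 0 ≤ ∏ k ∈ range n, (1 - a k) :=
    prod_nonneg fun k _ => sub_nonneg.2 (h1 k)
  have hle (n : ℕ) : ∏ k ∈ range n, (1 - a k) ≤ 1 :=
    prod_le_one (fun k _ => sub_nonneg.2 (h1 k)) fun k _ => by linarith [h0 k]
  refine exists_abs_sub_lt_of_forall_sub_lt hε (by simpa using ht.2) (fun n => ?_)
    (exists_prod_one_sub_lt_of_not_summable h0 h1 ha (by linarith [ht.1]))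
  rw [prod_range_succ]
  nlinarith [hnonneg n, hle n, h0 n, hsmall n]

theorem not_summable_primes_ge_one_div_add_two (N : ℕ) :
    ¬Summable fun p : ℕ => if p.Prime ∧ N ≤ p then 1 / ((p : ℝ) + 2) else 0 := by
  intro hs
  apply not_summable_one_div_on_primes
  refine (hs.mul_left 3).of_norm_bounded_eventually_nat ?_
  filter_upwards [Filter.eventually_ge_atTop N] with n hn
  by_cases hp : n.Prime
  · have h2 : (2 : ℝ) ≤ n := by exact_mod_cast hp.two_le
    rw [Set.indicator_of_mem (show n ∈ {p | p.Prime} from hp), if_pos ⟨hp, hn⟩,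
      Real.norm_eq_abs, abs_of_nonneg (by positivity), mul_one_div,
      div_le_div_iff₀ (by linarith) (by linarith)]
    linarith
  · simp [hp]

theorem exists_primes_prod_near {t ε : ℝ} (ht : t ∈ Set.Icc 0 1) (hε : 0 < ε) :
    ∃ S : Finset ℕ, (∀ p ∈ S, p.Prime ∧ p ≠ 2) ∧
      |∏ p ∈ S, ((p : ℝ) + 1) / (p + 2) - t| < ε := by
  obtain ⟨N, hN⟩ := exists_nat_gt (1 / ε)
  set M := max N 3
  let a : ℕ → ℝ := fun p => if p.Prime ∧ M ≤ p then 1 / ((p : ℝ) + 2) else 0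
  have ha (p : ℕ) : 1 - a p = if p.Prime ∧ M ≤ p then ((p : ℝ) + 1) / (p + 2) else 1 := by
    simp only [a]
    split_ifs
    · field_simp; ring
    · ring
  have h1 (p : ℕ) : a p ≤ 1 := by
    simp only [a]
    split_ifs
    · rw [div_le_one (by positivity)]
      linarith [p.cast_nonneg (α := ℝ)]
    · exact zero_le_one
  have hsmall (p : ℕ) : a p < ε := by
    simp only [a]
    split_ifs with hp
    · have : (N : ℝ) ≤ p := by exact_mod_cast (le_max_left N 3).trans hp.2
      exact (one_div_lt (by positivity) hε).2 (by linarith)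
    · exact hε
  obtain ⟨n, hn⟩ := exists_abs_prod_one_sub_sub_lt (fun p => by positivity) h1 hsmall
    (not_summable_primes_ge_one_div_add_two M) ht
  refine ⟨(range n).filter fun p => p.Prime ∧ M ≤ p, fun p hp => ?_, ?_⟩
  · have := (mem_filter.1 hp).2
    exact ⟨this.1, by omega⟩
  · rwa [prod_filter, ← prod_congr rfl fun p _ => ha p]

theorem stmt_17 :
    Set.Icc (0 : ℝ) 1 ⊆
      closure {x : ℝ | ∃ (G : Type) (_ : Group G) (_ : Finite G),
        x = (numInv G : ℝ) / (numCyc G : ℝ)} := by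
  intro t ht
  refine Metric.mem_closure_iff.2 fun ε hε => ?_
  obtain ⟨S, hS, hclose⟩ := exists_primes_prod_near ht hε
  obtain ⟨G, hG, hfin, hratio⟩ := exists_group_ratio_eq_prod S hS
  exact ⟨_, ⟨G, hG, hfin, rfl⟩, by rwa [Real.dist_eq, hratio, abs_sub_comm]⟩
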